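/- With H, C_q, C_q^Lsh as above: for all x, y ∈ C_q^Lsh, the commutator satisfies [x,y] ∈ (q−1)·C_q^Lsh. (Equivalently: δ_n([x,y]) ∈ (q−1)^{n+1} H^{⊗(n−1)} ⊗ C_q for all n ≥ 1.) -/

import Mathlib

open scoped TensorProduct
open PiTensorProduct

namespace GQDP

/-- The ground ring `ℂ[q,q⁻¹]` of complex Laurent polynomials. -/
abbrev R : Type := LaurentPolynomial ℂ

/-- The indeterminate `q`. -/
noncomputable def q : R := LaurentPolynomial.T 1

variable (H : Type*) [Ring H] [HopfAlgebra R H] [NoZeroSMulDivisors R H]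

/-- The `n`-fold tensor power `H^{⊗n}`. -/
abbrev TP (n : ℕ) := ⨂[R] (_ : Fin n), H

/-- The "tensor product" of two `R`-submodules of `H` inside `H ⊗[R] H`. -/
noncomputable def tsub (A B : Submodule R H) : Submodule R (H ⊗[R] H) :=
  Submodule.span R {z | ∃ a ∈ A, ∃ b ∈ B, z = a ⊗ₜ[R] b}

/-- The "tensor product" of a family of submodules `p i ⊆ H` inside `H^{⊗n}`: the additive
    subgroup generated by the pure tensors with `i`-th entry in `p i` (for `n ≥ 1` this
    coincides with the `R`-span of such pure tensors). -/
noncomputable def tgrp {n : ℕ} (p : Fin n → Submodule R H) : AddSubgroup (TP H n) :=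
  AddSubgroup.closure {z | ∃ f : Fin n → H, (∀ i, f i ∈ p i) ∧ z = PiTensorProduct.tprod R f}

/-- The canonical map `H ⊗ H^{⊗n} → H^{⊗(n+1)}`. -/
noncomputable def step (n : ℕ) : (H ⊗[R] TP H n) →ₗ[R] TP H (n + 1) :=
  ((PiTensorProduct.reindex R (fun _ : Fin 1 ⊕ Fin n => H)
      (finSumFinEquiv.trans (finCongr (Nat.add_comm 1 n)))).toLinearMap
    ∘ₗ (PiTensorProduct.tmulEquiv (ι := Fin 1) (ι₂ := Fin n) R H).toLinearMap)
    ∘ₗ (LinearMap.rTensor (TP H n)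
      (PiTensorProduct.subsingletonEquiv (0 : Fin 1) : (⨂[R] (_ : Fin 1), H) ≃ₗ[R] H).symm.toLinearMap)

/-- The iterated coproduct `Δⁿ : H → H^{⊗n}`, with `Δ⁰ := ε` and `Δ^{n+1} := (id ⊗ Δⁿ) ∘ Δ`. -/
noncomputable def DeltaIter : (n : ℕ) → H →ₗ[R] TP H n
  | 0 => (PiTensorProduct.isEmptyEquiv (ι := Fin 0)).symm.toLinearMap
          ∘ₗ (Coalgebra.counit : H →ₗ[R] R)
  | n + 1 => step H n ∘ₗ LinearMap.lTensor H (DeltaIter n)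
              ∘ₗ (Coalgebra.comul : H →ₗ[R] H ⊗[R] H)

/-- `δ_n := (id − η∘ε)^{⊗n} ∘ Δⁿ : H → H^{⊗n}`. -/
noncomputable def deltaN (n : ℕ) : H →ₗ[R] TP H n :=
  (PiTensorProduct.map fun _ =>
      (LinearMap.id : H →ₗ[R] H) - Algebra.linearMap R H ∘ₗ (Coalgebra.counit : H →ₗ[R] R))
    ∘ₗ DeltaIter H n

/-- Drinfeld's subalgebra `H' = { a ∈ H | δ_n(a) ∈ (q−1)ⁿ H^{⊗n} for all n }`. -/
noncomputable def Hprime : Set H :=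
  {a | ∀ n : ℕ, ∃ y : TP H n, deltaN H n a = ((q - 1) ^ n) • y}

/-- The Drinfeld-type transform `C^Lsh := { x ∈ C | δ_n(x) ∈ (q−1)ⁿ H^{⊗(n−1)} ⊗ C, ∀ n ≥ 1 }`. -/
noncomputable def Lsh (C : Submodule R H) : Set H :=
  {x | x ∈ C ∧ ∀ n : ℕ,
    ∃ y ∈ tgrp H (fun i : Fin (n + 1) => if i = Fin.last n then C else ⊤),
      deltaN H (n + 1) x = ((q - 1) ^ (n + 1)) • y}

end GQDP

/-!
Write `π = id − ηε` and, for `S ⊆ Fin n`, let `π_S` be `π` on the legs in `S` and `ηε` on the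
others, so that `∑ S, π_S = id` on `H^{⊗n}` and `δ_n = π_univ ∘ Δⁿ`. Since `ηε` in one leg
collapses `Δⁿ` to `Δⁿ⁻¹` with a `1` inserted there, induction on `n` shows that for `x ∈ C^Lsh`
the tensor `π_S Δⁿ(x)` is `(q − 1)^|S|` times a combination of pure tensors with `1` outside `S`
and last leg in `C`. As `Δⁿ` is multiplicative,
`δ_n(xy − yx) = ∑ S T, π_univ (π_S Δⁿx · π_T Δⁿy − π_T Δⁿy · π_S Δⁿx)`;
a term vanishes unless `S ∪ T = univ` (as `π 1 = 0`), and also if `S ∩ T = ∅` (the factors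
commute), so the surviving ones are divisible by `(q − 1)^(|S| + |T|)` with `|S| + |T| ≥ n + 1`.
Finally `π x = (q − 1) x'` with `x' ∈ C` gives `xy − yx = (q − 1)(x'y − yx')`, and one factor
`q − 1` cancels because tensor powers of the torsion-free, hence flat, module `H` over the PID
`ℂ[q, q⁻¹]` are torsion-free.
-/

namespace GQDP

section TensorPower

variable {K M : Type*} [CommRing K] [AddCommGroup M] [Module K M] {n : ℕ}

noncomputable def consEquiv (n : ℕ) : (M ⊗[K] (⨂[K] _ : Fin n, M)) ≃ₗ[K] ⨂[K] _ : Fin (n + 1), M :=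
  (TensorProduct.congr (subsingletonEquiv (0 : Fin 1)).symm (LinearEquiv.refl K _)).trans
    ((tmulEquiv (ι := Fin 1) (ι₂ := Fin n) K M).trans
      (reindex K (fun _ => M) (finSumFinEquiv.trans (finCongr (Nat.add_comm 1 n)))))

lemma consEquiv_tmul (a : M) (f : Fin n → M) :
    consEquiv n (a ⊗ₜ[K] tprod K f) = PiTensorProduct.tprod K (Fin.cons a f) := by
  have h : (subsingletonEquiv (0 : Fin 1)).symm a = PiTensorProduct.tprod K fun _ : Fin 1 => a := by
    rw [LinearEquiv.symm_apply_eq, subsingletonEquiv_apply_tprod]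
  simp only [consEquiv, LinearEquiv.trans_apply, TensorProduct.congr_tmul, h,
    LinearEquiv.refl_apply, tmulEquiv_apply, reindex_tprod]
  congr 1
  ext j
  cases j using Fin.cases with
  | zero => rfl
  | succ k =>
    have : Fin.cast (Nat.add_comm 1 n).symm k.succ = Fin.natAdd 1 k := Fin.ext (Nat.add_comm _ _)
    simp [this]

lemma map_comp_consEquiv (φ : Fin (n + 1) → M →ₗ[K] M) :
    map φ ∘ₗ (consEquiv n).toLinearMap =
      (consEquiv n).toLinearMap ∘ₗ TensorProduct.map (φ 0) (map fun k => φ k.succ) := by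
  ext a f
  simp only [LinearMap.compMultilinearMap_apply, LinearMap.coe_comp, Function.comp_apply,
    LinearEquiv.coe_toLinearMap, TensorProduct.AlgebraTensorModule.curry_apply,
    TensorProduct.curry_apply, LinearMap.coe_restrictScalars, TensorProduct.map_tmul, map_tprod,
    consEquiv_tmul]
  congr 1
  ext j
  cases j using Fin.cases <;> simp

instance flat_tensorPower [Module.Flat K M] : (n : ℕ) → Module.Flat K (⨂[K] _ : Fin n, M)
  | 0 => .of_linearEquiv (isEmptyEquiv (Fin 0))
  | n + 1 => have := flat_tensorPower n; .of_linearEquiv (consEquiv n).symm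

end TensorPower

section TensorSpan

variable {K M : Type*} [CommRing K] [AddCommGroup M] [Module K M] {ι : Type*}

noncomputable def tensorSpan (p : ι → Submodule K M) : Submodule K (⨂[K] _ : ι, M) :=
  Submodule.span K {z | ∃ f : ι → M, (∀ i, f i ∈ p i) ∧ z = tprod K f}

variable {p p' : ι → Submodule K M}

lemma tprod_mem_tensorSpan {f : ι → M} (hf : ∀ i, f i ∈ p i) : tprod K f ∈ tensorSpan p :=
  Submodule.subset_span ⟨f, hf, rfl⟩

lemma tensorSpan_le_iff {P : Submodule K (⨂[K] _ : ι, M)} :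
    tensorSpan p ≤ P ↔ ∀ f : ι → M, (∀ i, f i ∈ p i) → tprod K f ∈ P := by
  simp only [tensorSpan, Submodule.span_le, Set.subset_def, SetLike.mem_coe]
  exact ⟨fun h f hf => h _ ⟨f, hf, rfl⟩, fun h _ ⟨f, hf, hz⟩ => hz ▸ h f hf⟩

lemma tensorSpan_eq_top [IsEmpty ι] (p : ι → Submodule K M) : tensorSpan p = ⊤ := by
  refine Submodule.eq_top_iff'.2 fun v => ?_
  induction v using PiTensorProduct.induction_on with
  | smul_tprod r f => exact Submodule.smul_mem _ r (tprod_mem_tensorSpan isEmptyElim)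
  | add v w hv hw => exact add_mem hv hw

lemma map_mem_tensorSpan {φ : ι → M →ₗ[K] M} (h : ∀ i, ∀ a ∈ p i, φ i a ∈ p' i)
    {v : ⨂[K] _ : ι, M} (hv : v ∈ tensorSpan p) : map φ v ∈ tensorSpan p' := by
  refine (tensorSpan_le_iff (P := (tensorSpan p').comap (map φ))).2 (fun f hf => ?_) hv
  rw [Submodule.mem_comap, map_tprod]
  exact tprod_mem_tensorSpan fun i => h i _ (hf i)

lemma map_eq_zero_of_mem_tensorSpan {φ : ι → M →ₗ[K] M} (i : ι) (h : ∀ a ∈ p i, φ i a = 0)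
    {v : ⨂[K] _ : ι, M} (hv : v ∈ tensorSpan p) : map φ v = 0 := by
  refine (tensorSpan_le_iff (P := LinearMap.ker (map φ))).2 (fun f hf => ?_) hv
  rw [LinearMap.mem_ker, map_tprod]
  exact MultilinearMap.map_coord_zero _ (m := fun i => φ i (f i)) i (h _ (hf i))

lemma subsingletonEquiv_mem_of_mem_tensorSpan [Subsingleton ι] (i₀ : ι)
    {v : ⨂[K] _ : ι, M} (hv : v ∈ tensorSpan p) : subsingletonEquiv i₀ v ∈ p i₀ :=
  (tensorSpan_le_iff (P := (p i₀).comap (subsingletonEquiv i₀).toLinearMap)).2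
    (fun f hf => by simpa [subsingletonEquiv_apply_tprod] using hf i₀) hv

end TensorSpan

section TensorPowerAlgebra

variable {K A : Type*} [CommRing K] [Ring A] [Algebra K A] {ι : Type*} {n : ℕ}

lemma mul_mem_tensorSpan {p p' p'' : ι → Submodule K A}
    (h : ∀ i, ∀ a ∈ p i, ∀ b ∈ p' i, a * b ∈ p'' i)
    {u v : ⨂[K] _ : ι, A} (hu : u ∈ tensorSpan p) (hv : v ∈ tensorSpan p') :
    u * v ∈ tensorSpan p'' := by
  have : tensorSpan p * tensorSpan p' ≤ tensorSpan p'' := by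
    rw [tensorSpan, tensorSpan, Submodule.span_mul_span, Submodule.span_le]
    rintro _ ⟨_, ⟨f, hf, rfl⟩, _, ⟨g, hg, rfl⟩, rfl⟩
    show tprod K f * tprod K g ∈ tensorSpan p''
    rw [tprod_mul_tprod]
    exact tprod_mem_tensorSpan fun i => h i _ (hf i) _ (hg i)
  exact this (Submodule.mul_mem_mul hu hv)

lemma commute_of_mem_tensorSpan {p p' : ι → Submodule K A}
    (h : ∀ i, ∀ a ∈ p i, ∀ b ∈ p' i, Commute a b)
    {u v : ⨂[K] _ : ι, A} (hu : u ∈ tensorSpan p) (hv : v ∈ tensorSpan p') : Commute u v := by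
  induction hu, hv using Submodule.span_induction₂ with
  | mem_mem _ _ hf hg =>
    obtain ⟨f, hf, rfl⟩ := hf
    obtain ⟨g, hg, rfl⟩ := hg
    exact Commute.tprod (funext fun i => (h i _ (hf i) _ (hg i)).eq)
  | zero_left => exact Commute.zero_left _
  | zero_right => exact Commute.zero_right _
  | add_left _ _ _ _ _ _ h₁ h₂ => exact h₁.add_left h₂
  | add_right _ _ _ _ _ _ h₁ h₂ => exact h₁.add_right h₂
  | smul_left r _ _ _ _ h => exact h.smul_left r
  | smul_right r _ _ _ _ h => exact h.smul_right r

lemma consEquiv_mul_tmul (a₁ a₂ : A) (b₁ b₂ : ⨂[K] _ : Fin n, A) :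
    consEquiv n ((a₁ * a₂) ⊗ₜ[K] (b₁ * b₂)) = consEquiv n (a₁ ⊗ₜ b₁) * consEquiv n (a₂ ⊗ₜ b₂) := by
  induction b₁ using PiTensorProduct.induction_on with
  | smul_tprod r f =>
    induction b₂ using PiTensorProduct.induction_on with
    | smul_tprod s g =>
      simp only [smul_mul_smul_comm, TensorProduct.tmul_smul, map_smul, tprod_mul_tprod,
        consEquiv_tmul]
      congr 2
      ext j
      cases j using Fin.cases <;> simp
    | add b b' hb hb' => simp only [mul_add, TensorProduct.tmul_add, map_add, hb, hb']
  | add b b' hb hb' => simp only [add_mul, TensorProduct.tmul_add, map_add, hb, hb']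

noncomputable def consAlgEquiv (n : ℕ) :
    (A ⊗[K] (⨂[K] _ : Fin n, A)) ≃ₐ[K] ⨂[K] _ : Fin (n + 1), A :=
  Algebra.TensorProduct.algEquivOfLinearEquivTensorProduct (consEquiv n) consEquiv_mul_tmul <| by
    rw [PiTensorProduct.one_def, consEquiv_tmul, PiTensorProduct.one_def]
    congr 1
    ext j
    cases j using Fin.cases <;> simp

noncomputable def insertOne (i : Fin (n + 1)) :
    (⨂[K] _ : Fin n, A) →ₗ[K] ⨂[K] _ : Fin (n + 1), A :=
  lift ((PiTensorProduct.tprod K (s := fun _ : Fin (n + 1) => A)).curryMid i 1)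

lemma insertOne_tprod (i : Fin (n + 1)) (f : Fin n → A) :
    insertOne i (tprod K f) = PiTensorProduct.tprod K (i.insertNth 1 f) := by
  simp [insertOne]

lemma insertOne_mem_tensorSpan {p : Fin n → Submodule K A} {p' : Fin (n + 1) → Submodule K A}
    {i : Fin (n + 1)} (h : ∀ k, p k ≤ p' (i.succAbove k)) (h1 : (1 : A) ∈ p' i)
    {v : ⨂[K] _ : Fin n, A} (hv : v ∈ tensorSpan p) : insertOne i v ∈ tensorSpan p' := by
  refine (tensorSpan_le_iff (P := (tensorSpan p').comap (insertOne i))).2 (fun f hf => ?_) hv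
  rw [Submodule.mem_comap, insertOne_tprod]
  refine tprod_mem_tensorSpan fun j => ?_
  cases j using Fin.succAboveCases i <;> simp [h1, h _ (hf _)]

lemma map_insertOne (φ : Fin (n + 1) → A →ₗ[K] A) (i : Fin (n + 1)) (h : φ i 1 = 1)
    (v : ⨂[K] _ : Fin n, A) :
    map φ (insertOne i v) = insertOne i (map (fun k => φ (i.succAbove k)) v) := by
  induction v using PiTensorProduct.induction_on with
  | smul_tprod r f =>
    simp only [map_smul, insertOne_tprod, map_tprod]
    congr 2
    ext j
    cases j using Fin.succAboveCases i <;> simp [h]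
  | add v w hv hw => simp only [map_add, hv, hw]

lemma insertOne_zero (v : ⨂[K] _ : Fin n, A) : insertOne 0 v = consEquiv n (1 ⊗ₜ v) := by
  induction v using PiTensorProduct.induction_on with
  | smul_tprod r f => simp [insertOne_tprod, consEquiv_tmul]
  | add v w hv hw => simp only [map_add, TensorProduct.tmul_add, hv, hw]

lemma consEquiv_lTensor_insertOne (k : Fin (n + 1)) (u : A ⊗[K] (⨂[K] _ : Fin n, A)) :
    consEquiv (n + 1) (LinearMap.lTensor A (insertOne k) u) = insertOne k.succ (consEquiv n u) := by
  induction u using TensorProduct.induction_on with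
  | zero => simp
  | add u w hu hw => simp only [map_add, hu, hw]
  | tmul a v =>
    induction v using PiTensorProduct.induction_on with
    | smul_tprod r f =>
      simp only [TensorProduct.tmul_smul, map_smul, LinearMap.lTensor_tmul, insertOne_tprod,
        consEquiv_tmul]
      congr 2
      ext j
      cases j using Fin.cases with
      | zero => simp
      | succ m => cases m using Fin.succAboveCases k <;> simp
    | add v w hv hw => simp only [TensorProduct.tmul_add, map_add, hv, hw]

end TensorPowerAlgebra

open Polynomial in
instance : IsDedekindDomain R :=
  IsLocalization.isDedekindDomain ℂ[X] (powers_le_nonZeroDivisors_of_noZeroDivisors X_ne_zero) R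

open Polynomial in
lemma q_sub_one_ne_zero : (q - 1 : R) ≠ 0 := by
  have h : (q - 1 : R) = algebraMap ℂ[X] R (X - 1) := by simp [q]
  rw [h, Ne, map_eq_zero_iff _ (IsLocalization.injective R
    (powers_le_nonZeroDivisors_of_noZeroDivisors X_ne_zero))]
  exact X_sub_C_ne_zero 1

section Hopf

variable {H : Type*} [Ring H] [HopfAlgebra R H]

lemma step_eq_consEquiv (n : ℕ) : step H n = (consEquiv n).toLinearMap := rfl

noncomputable def deltaIterAlgHom : (n : ℕ) → H →ₐ[R] TP H n
  | 0 => (Algebra.ofId R _).comp (Bialgebra.counitAlgHom R H)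
  | n + 1 => ((consAlgEquiv n).toAlgHom.comp
      (Algebra.TensorProduct.map (AlgHom.id R H) (deltaIterAlgHom n))).comp
      (Bialgebra.comulAlgHom R H)

lemma toLinearMap_deltaIterAlgHom : ∀ n, (deltaIterAlgHom n).toLinearMap = DeltaIter H n
  | 0 => by
    ext a
    simp only [deltaIterAlgHom, DeltaIter, AlgHom.toLinearMap_apply, AlgHom.comp_apply,
      Algebra.ofId_apply, Bialgebra.counitAlgHom_apply, LinearMap.coe_comp, Function.comp_apply,
      LinearEquiv.coe_toLinearMap]
    rw [Algebra.algebraMap_eq_smul_one, LinearEquiv.eq_symm_apply, map_smul,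
      PiTensorProduct.one_def, isEmptyEquiv_apply_tprod, smul_eq_mul, mul_one]
  | n + 1 => by
    rw [DeltaIter, ← toLinearMap_deltaIterAlgHom n]
    rfl

lemma DeltaIter_mul (n : ℕ) (a b : H) :
    DeltaIter H n (a * b) = DeltaIter H n a * DeltaIter H n b := by
  simp only [← toLinearMap_deltaIterAlgHom, AlgHom.toLinearMap_apply, map_mul]

lemma DeltaIter_one_apply (a : H) : DeltaIter H 1 a = PiTensorProduct.tprod R fun _ => a := by
  have h0 : DeltaIter H 0 = Algebra.linearMap R (TP H 0) ∘ₗ Coalgebra.counit := by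
    rw [← toLinearMap_deltaIterAlgHom]
    rfl
  rw [DeltaIter, LinearMap.comp_apply, LinearMap.comp_apply, h0, LinearMap.lTensor_comp,
    LinearMap.comp_apply, Coalgebra.lTensor_counit_comul, LinearMap.lTensor_tmul,
    Algebra.linearMap_apply, map_one, PiTensorProduct.one_def, step_eq_consEquiv,
    LinearEquiv.coe_toLinearMap, consEquiv_tmul]
  congr 1
  ext j
  fin_cases j
  rfl

variable (H) in
noncomputable def projAug : H →ₗ[R] H :=
  LinearMap.id - Algebra.linearMap R H ∘ₗ Coalgebra.counit

variable (H) in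
noncomputable def unitCounit : H →ₗ[R] H :=
  Algebra.linearMap R H ∘ₗ Coalgebra.counit

lemma projAug_apply (a : H) : projAug H a = a - algebraMap R H (Coalgebra.counit a) := rfl

lemma unitCounit_apply (a : H) : unitCounit H a = algebraMap R H (Coalgebra.counit a) := rfl

lemma projAug_add_unitCounit (a : H) : projAug H a + unitCounit H a = a :=
  sub_add_cancel _ _

lemma projAug_algebraMap (r : R) : projAug H (algebraMap R H r) = 0 := by
  simp [projAug_apply]

lemma projAug_mem {B : Subalgebra R H} {a : H} (ha : a ∈ B) : projAug H a ∈ B :=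
  B.sub_mem ha (B.algebraMap_mem _)

lemma commutator_projAug (a b : H) : projAug H a * b - b * projAug H a = a * b - b * a := by
  simp only [projAug_apply, sub_mul, mul_sub, Algebra.commutes]
  abel

noncomputable def projOn {n : ℕ} (S : Finset (Fin n)) : TP H n →ₗ[R] TP H n :=
  map fun i => if i ∈ S then projAug H else unitCounit H

lemma deltaN_eq_projOn_univ (n : ℕ) (a : H) :
    deltaN H n a = projOn Finset.univ (DeltaIter H n a) := by
  simp [deltaN, projOn, projAug]

lemma sum_projOn {n : ℕ} (v : TP H n) : ∑ S, projOn S v = v := by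
  induction v using PiTensorProduct.induction_on with
  | smul_tprod r f =>
    simp only [map_smul, ← Finset.smul_sum]
    congr 1
    conv_rhs => rw [show f = (fun i => projAug H (f i)) + (fun i => unitCounit H (f i)) from
      funext fun i => (projAug_add_unitCounit _).symm, MultilinearMap.map_add_univ]
    refine Finset.sum_congr rfl fun S _ => ?_
    rw [projOn, map_tprod]
    congr 1
    ext i
    by_cases hi : i ∈ S <;> simp [hi]
  | add v w hv hw => simp only [map_add, Finset.sum_add_distrib, hv, hw]

lemma map_comp_step (n : ℕ) (φ : Fin (n + 1) → H →ₗ[R] H) :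
    map φ ∘ₗ step H n = step H n ∘ₗ TensorProduct.map (φ 0) (map fun k => φ k.succ) :=
  map_comp_consEquiv φ

lemma map_update_zero_unitCounit_comp_DeltaIter (n : ℕ) :
    map (Function.update (fun _ => LinearMap.id) 0 (unitCounit H)) ∘ₗ DeltaIter H (n + 1) =
      insertOne 0 ∘ₗ DeltaIter H n := by
  have hφ : (fun k : Fin n => Function.update (fun _ => LinearMap.id) 0 (unitCounit H) k.succ) =
      fun _ => LinearMap.id :=
    funext fun k => Function.update_of_ne (Fin.succ_ne_zero k) _ _
  have hcounit (a : H) : TensorProduct.map (unitCounit H) (DeltaIter H n) (Coalgebra.comul a) =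
      1 ⊗ₜ DeltaIter H n a := by
    rw [← LinearMap.lTensor_comp_rTensor, unitCounit, LinearMap.rTensor_comp]
    simp only [LinearMap.comp_apply, Coalgebra.rTensor_counit_comul, LinearMap.rTensor_tmul,
      Algebra.linearMap_apply, map_one, LinearMap.lTensor_tmul]
  rw [DeltaIter, ← LinearMap.comp_assoc, map_comp_step, Function.update_self, hφ, map_id]
  ext a
  simp only [LinearMap.comp_apply, LinearMap.map_lTensor, LinearMap.id_comp, hcounit,
    insertOne_zero, step_eq_consEquiv, LinearEquiv.coe_toLinearMap]

lemma map_update_unitCounit_comp_DeltaIter (n : ℕ) (i : Fin (n + 1)) :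
    map (Function.update (fun _ => LinearMap.id) i (unitCounit H)) ∘ₗ DeltaIter H (n + 1) =
      insertOne i ∘ₗ DeltaIter H n := by
  induction n with
  | zero => exact Fin.fin_one_eq_zero i ▸ map_update_zero_unitCounit_comp_DeltaIter 0
  | succ m ih =>
    cases i using Fin.cases with
    | zero => exact map_update_zero_unitCounit_comp_DeltaIter _
    | succ k =>
      have hφ : (fun j : Fin (m + 1) =>
          Function.update (fun _ => LinearMap.id) k.succ (unitCounit H) j.succ) =
          Function.update (fun _ => LinearMap.id) k (unitCounit H) :=
        Function.update_comp_eq_of_injective _ (Fin.succ_injective _) k _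
      rw [DeltaIter, ← LinearMap.comp_assoc, map_comp_step,
        Function.update_of_ne (Fin.succ_ne_zero k).symm, hφ]
      ext a
      simp only [LinearMap.comp_apply, LinearMap.map_lTensor]
      rw [ih k, ← LinearMap.map_lTensor]
      exact consEquiv_lTensor_insertOne k _

lemma unitCounit_comp_unitCounit : unitCounit H ∘ₗ unitCounit H = unitCounit H :=
  LinearMap.ext fun a => by simp [unitCounit_apply]

lemma projOn_comp_map_update_unitCounit {n : ℕ} {S : Finset (Fin n)} {i : Fin n} (hi : i ∉ S) :
    projOn S ∘ₗ map (Function.update (fun _ => LinearMap.id) i (unitCounit H)) = projOn S := by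
  rw [projOn, ← PiTensorProduct.map_comp]
  congr 1
  ext1 j
  rcases eq_or_ne j i with rfl | hj
  · simp [hi, unitCounit_comp_unitCounit]
  · simp [Function.update_of_ne hj]

lemma projOn_DeltaIter_succ {n : ℕ} {S : Finset (Fin (n + 1))} {i : Fin (n + 1)} (hi : i ∉ S)
    (a : H) : projOn S (DeltaIter H (n + 1) a) =
      insertOne i (projOn (S.preimage i.succAbove Fin.succAbove_right_injective.injOn)
        (DeltaIter H n a)) := by
  rw [← projOn_comp_map_update_unitCounit hi, LinearMap.comp_apply, ← LinearMap.comp_apply (map _),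
    map_update_unitCounit_comp_DeltaIter, LinearMap.comp_apply, projOn, map_insertOne]
  · simp [projOn]
  · simp [hi, unitCounit_apply]

lemma tgrp_le_tensorSpan {n : ℕ} (p : Fin n → Submodule R H) :
    tgrp H p ≤ (tensorSpan p).toAddSubgroup :=
  (AddSubgroup.closure_le _).2 fun _ ⟨_, hf, hz⟩ => hz ▸ tprod_mem_tensorSpan hf

lemma mem_tgrp_iff {n : ℕ} {p : Fin (n + 1) → Submodule R H} {v : TP H (n + 1)} :
    v ∈ tgrp H p ↔ v ∈ tensorSpan p := by
  refine ⟨fun hv => tgrp_le_tensorSpan p hv, fun hv => ?_⟩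
  induction hv using Submodule.closure_induction with
  | zero => exact zero_mem _
  | add _ _ _ _ h₁ h₂ => exact add_mem h₁ h₂
  | smul_mem r _ h =>
    obtain ⟨f, hf, rfl⟩ := h
    have : r • tprod R f = tprod R (Function.update f 0 (r • f 0)) := by
      rw [MultilinearMap.map_update_smul, Function.update_eq_self]
    rw [this]
    refine AddSubgroup.subset_closure ⟨_, fun i => ?_, rfl⟩
    rcases eq_or_ne i 0 with rfl | hi
    · simpa using (p 0).smul_mem r (hf 0)
    · simpa [Function.update_of_ne hi] using hf i

end Hopf

lemma card_preimage_succAbove {n : ℕ} {S : Finset (Fin (n + 1))} {i : Fin (n + 1)} (hi : i ∉ S) :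
    (S.preimage i.succAbove Fin.succAbove_right_injective.injOn).card = S.card := by
  rw [Finset.card_preimage]
  congr 1
  exact Finset.filter_true_of_mem fun j hj => by
    simpa [Fin.range_succAbove] using ne_of_mem_of_not_mem hj hi

section SupportedSpan

variable {H : Type*} [Ring H] [HopfAlgebra R H] (C : Subalgebra R H) {n : ℕ}

noncomputable def supportedSlot (S : Finset (Fin n)) (i : Fin n) : Subalgebra R H :=
  if i ∈ S then (if (i : ℕ) + 1 = n then C else ⊤) else ⊥

noncomputable def supportedSpan (S : Finset (Fin n)) : Submodule R (TP H n) :=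
  tensorSpan fun i => (supportedSlot C S i).toSubmodule

variable {C}

lemma supportedSlot_mono {S T : Finset (Fin n)} (h : S ⊆ T) (i : Fin n) :
    supportedSlot C S i ≤ supportedSlot C T i := by
  unfold supportedSlot
  split_ifs <;> first | exact bot_le | exact le_rfl | exact absurd (h ‹_›) ‹_›

lemma supportedSlot_of_notMem {S : Finset (Fin n)} {i : Fin n} (hi : i ∉ S) :
    supportedSlot C S i = ⊥ :=
  if_neg hi

lemma supportedSpan_fin_zero (S : Finset (Fin 0)) : supportedSpan C S = ⊤ :=
  tensorSpan_eq_top _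

lemma supportedSpan_univ_eq :
    supportedSpan C (Finset.univ : Finset (Fin (n + 1))) =
      tensorSpan fun i => if i = Fin.last n then C.toSubmodule else ⊤ := by
  unfold supportedSpan supportedSlot
  congr 1
  ext1 i
  simp only [Finset.mem_univ, if_true, Fin.ext_iff, Fin.val_last, Nat.add_right_cancel_iff]
  split_ifs <;> simp

lemma mul_mem_supportedSpan {S T : Finset (Fin n)} {u v : TP H n} (hu : u ∈ supportedSpan C S)
    (hv : v ∈ supportedSpan C T) : u * v ∈ supportedSpan C (S ∪ T) :=
  mul_mem_tensorSpan (fun i _ ha _ hb =>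
    Subalgebra.mul_mem _ (supportedSlot_mono Finset.subset_union_left i ha)
      (supportedSlot_mono Finset.subset_union_right i hb)) hu hv

lemma commute_of_mem_supportedSpan {S T : Finset (Fin n)} (hST : Disjoint S T) {u v : TP H n}
    (hu : u ∈ supportedSpan C S) (hv : v ∈ supportedSpan C T) : Commute u v := by
  refine commute_of_mem_tensorSpan (fun i a ha b hb => ?_) hu hv
  by_cases hiS : i ∈ S
  · rw [supportedSlot_of_notMem (Finset.disjoint_left.1 hST hiS)] at hb
    obtain ⟨r, rfl⟩ := Algebra.mem_bot.1 hb
    exact (Algebra.commutes r a).symm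
  · rw [supportedSlot_of_notMem hiS] at ha
    obtain ⟨r, rfl⟩ := Algebra.mem_bot.1 ha
    exact Algebra.commutes r b

lemma projOn_univ_mem_supportedSpan {S : Finset (Fin n)} {u : TP H n}
    (hu : u ∈ supportedSpan C S) : projOn Finset.univ u ∈ supportedSpan C Finset.univ := by
  refine map_mem_tensorSpan (fun i a ha => ?_) hu
  simpa using supportedSlot_mono (Finset.subset_univ S) i (projAug_mem ha)

lemma projOn_univ_eq_zero {S : Finset (Fin n)} (hS : S ≠ Finset.univ) {u : TP H n}
    (hu : u ∈ supportedSpan C S) : projOn Finset.univ u = 0 := by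
  obtain ⟨i, hi⟩ : ∃ i, i ∉ S := by simpa [Finset.eq_univ_iff_forall] using hS
  refine map_eq_zero_of_mem_tensorSpan i (fun a ha => ?_) hu
  rw [supportedSlot_of_notMem hi] at ha
  obtain ⟨r, rfl⟩ := Algebra.mem_bot.1 ha
  simpa using projAug_algebraMap r

lemma supportedSlot_preimage_succAbove_le (S : Finset (Fin (n + 1))) (i : Fin (n + 1))
    (k : Fin n) : supportedSlot C (S.preimage i.succAbove Fin.succAbove_right_injective.injOn) k ≤
      supportedSlot C S (i.succAbove k) := by
  have hle : (i.succAbove k : ℕ) ≤ k + 1 := by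
    rcases lt_or_ge k.castSucc i with h | h
    · simp [Fin.succAbove_of_castSucc_lt _ _ h]
    · simp [Fin.succAbove_of_le_castSucc _ _ h]
  have := k.isLt
  simp only [supportedSlot, Finset.mem_preimage]
  split_ifs <;> first | exact bot_le | exact le_top | exact le_rfl | omega

lemma insertOne_mem_supportedSpan {S : Finset (Fin (n + 1))} {i : Fin (n + 1)} (hi : i ∉ S)
    {v : TP H n}
    (hv : v ∈ supportedSpan C (S.preimage i.succAbove Fin.succAbove_right_injective.injOn)) :
    insertOne i v ∈ supportedSpan C S :=
  insertOne_mem_tensorSpan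
    (fun k => Subalgebra.toSubmodule.monotone (supportedSlot_preimage_succAbove_le S i k))
    (by simp [supportedSlot_of_notMem hi]) hv

end SupportedSpan

section Lsh

open scoped Pointwise

variable {H : Type*} [Ring H] [HopfAlgebra R H] {C : Subalgebra R H}

lemma projOn_DeltaIter_mem_of_mem_Lsh {x : H} (hx : x ∈ Lsh H C.toSubmodule) :
    ∀ (n : ℕ) (S : Finset (Fin n)),
      projOn S (DeltaIter H n x) ∈ (q - 1) ^ S.card • supportedSpan C S
  | 0, S => by
    rw [Finset.eq_empty_of_isEmpty S, Finset.card_empty, pow_zero, one_smul,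
      supportedSpan_fin_zero]
    exact Submodule.mem_top
  | n + 1, S => by
    by_cases hS : S = Finset.univ
    · subst hS
      obtain ⟨y, hy, hxy⟩ := hx.2 n
      rw [← deltaN_eq_projOn_univ, hxy, Finset.card_univ, Fintype.card_fin,
        supportedSpan_univ_eq]
      exact Submodule.smul_mem_pointwise_smul _ _ _ (mem_tgrp_iff.1 hy)
    · obtain ⟨i, hi⟩ : ∃ i, i ∉ S := by simpa [Finset.eq_univ_iff_forall] using hS
      obtain ⟨w, hw, hw'⟩ := (Submodule.mem_smul_pointwise_iff_exists _ _ _).1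
        (projOn_DeltaIter_mem_of_mem_Lsh hx n (S.preimage i.succAbove
          Fin.succAbove_right_injective.injOn))
      rw [projOn_DeltaIter_succ hi, ← hw', map_smul, card_preimage_succAbove hi]
      exact Submodule.smul_mem_pointwise_smul _ _ _ (insertOne_mem_supportedSpan hi hw)

lemma exists_projAug_eq_smul_of_mem_Lsh {x : H} (hx : x ∈ Lsh H C.toSubmodule) :
    ∃ x' ∈ C, projAug H x = (q - 1) • x' := by
  obtain ⟨y, hy, hxy⟩ : ∃ y ∈ tgrp H fun i : Fin 1 => if i = Fin.last 0 then C.toSubmodule else ⊤,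
      deltaN H 1 x = (q - 1) ^ 1 • y := hx.2 0
  have h : PiTensorProduct.tprod R (fun _ : Fin 1 => projAug H x) = (q - 1) • y := by
    rw [← pow_one (q - 1), ← hxy, deltaN, LinearMap.comp_apply, DeltaIter_one_apply, map_tprod]
    rfl
  refine ⟨subsingletonEquiv 0 y, ?_, ?_⟩
  · simpa using subsingletonEquiv_mem_of_mem_tensorSpan (ι := Fin 1) 0 (mem_tgrp_iff.1 hy)
  · simpa [subsingletonEquiv_apply_tprod] using congrArg (subsingletonEquiv 0) h

lemma projOn_univ_commutator_mem {n : ℕ} {S T : Finset (Fin n)} {u v : TP H n}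
    (hu : u ∈ (q - 1) ^ S.card • supportedSpan C S)
    (hv : v ∈ (q - 1) ^ T.card • supportedSpan C T) :
    projOn Finset.univ (u * v - v * u) ∈ (q - 1) ^ (n + 1) • supportedSpan C Finset.univ := by
  obtain ⟨u, hu₀, rfl⟩ := (Submodule.mem_smul_pointwise_iff_exists _ _ _).1 hu
  obtain ⟨v, hv₀, rfl⟩ := (Submodule.mem_smul_pointwise_iff_exists _ _ _).1 hv
  rw [smul_mul_smul_comm, smul_mul_smul_comm, mul_comm ((q - 1) ^ T.card), ← smul_sub, map_smul,
    ← pow_add]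
  have huv := mul_mem_supportedSpan hu₀ hv₀
  have hvu := Finset.union_comm T S ▸ mul_mem_supportedSpan hv₀ hu₀
  by_cases hST : S ∪ T = Finset.univ
  · by_cases hdisj : Disjoint S T
    · rw [(commute_of_mem_supportedSpan hdisj hu₀ hv₀).eq, sub_self, map_zero, smul_zero]
      exact zero_mem _
    · have hcard : n + 1 ≤ S.card + T.card := by
        have := Finset.card_union_add_card_inter S T
        rw [hST, Finset.card_univ, Fintype.card_fin] at this
        have := Finset.card_pos.2 (Finset.not_disjoint_iff_nonempty_inter.1 hdisj)
        omega
      have hmem := projOn_univ_mem_supportedSpan (sub_mem huv hvu)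
      obtain ⟨k, hk⟩ := Nat.exists_eq_add_of_le hcard
      rw [hk, pow_add (q - 1) (n + 1) k, mul_smul]
      exact Submodule.smul_mem_pointwise_smul _ _ _ (Submodule.smul_mem _ _ hmem)
  · rw [map_sub, projOn_univ_eq_zero hST huv, projOn_univ_eq_zero hST hvu, sub_self, smul_zero]
    exact zero_mem _

lemma deltaN_commutator_mem_of_mem_Lsh {x y : H} (hx : x ∈ Lsh H C.toSubmodule)
    (hy : y ∈ Lsh H C.toSubmodule) (n : ℕ) :
    deltaN H n (x * y - y * x) ∈ (q - 1) ^ (n + 1) • supportedSpan C Finset.univ := by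
  have hexp : deltaN H n (x * y - y * x) = ∑ S, ∑ T, projOn Finset.univ
      (projOn S (DeltaIter H n x) * projOn T (DeltaIter H n y) -
        projOn T (DeltaIter H n y) * projOn S (DeltaIter H n x)) := by
    rw [deltaN_eq_projOn_univ, map_sub, DeltaIter_mul, DeltaIter_mul]
    conv_lhs => rw [← sum_projOn (DeltaIter H n x), ← sum_projOn (DeltaIter H n y)]
    rw [Finset.sum_mul_sum, Finset.sum_mul_sum,
      Finset.sum_comm (f := fun T S => projOn T (DeltaIter H n y) * projOn S (DeltaIter H n x))]
    simp only [map_sum, map_sub, ← Finset.sum_sub_distrib]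
  rw [hexp]
  exact Submodule.sum_mem _ fun S _ => Submodule.sum_mem _ fun T _ =>
    projOn_univ_commutator_mem (projOn_DeltaIter_mem_of_mem_Lsh hx n S)
      (projOn_DeltaIter_mem_of_mem_Lsh hy n T)

end Lsh

lemma smul_q_sub_one_injective {H : Type*} [Ring H] [HopfAlgebra R H] [NoZeroSMulDivisors R H]
    (n : ℕ) : Function.Injective ((q - 1) • · : TP H n → TP H n) :=
  have : Module.IsTorsionFree R H := .of_smul_eq_zero fun _ _ => eq_zero_or_eq_zero_of_smul_eq_zero
  Module.IsTorsionFree.isSMulRegular (IsRegular.of_ne_zero q_sub_one_ne_zero)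

variable (H : Type*) [Ring H] [HopfAlgebra R H] [NoZeroSMulDivisors R H]

theorem Lsh_proper (C : Subalgebra R H) :
    ∀ x ∈ Lsh H C.toSubmodule, ∀ y ∈ Lsh H C.toSubmodule,
      ∃ z ∈ Lsh H C.toSubmodule, x * y - y * x = (q - 1) • z := by
  intro x hx y hy
  obtain ⟨x', hx'C, hx'⟩ := exists_projAug_eq_smul_of_mem_Lsh hx
  have hcomm : x * y - y * x = (q - 1) • (x' * y - y * x') := by
    rw [← commutator_projAug, hx', smul_mul_assoc, mul_smul_comm, smul_sub]
  refine ⟨x' * y - y * x', ⟨C.sub_mem (C.mul_mem hx'C hy.1) (C.mul_mem hy.1 hx'C), fun n => ?_⟩,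
    hcomm⟩
  obtain ⟨w, hw, hδ⟩ := (Submodule.mem_smul_pointwise_iff_exists _ _ _).1
    (deltaN_commutator_mem_of_mem_Lsh hx hy (n + 1))
  rw [supportedSpan_univ_eq] at hw
  refine ⟨w, mem_tgrp_iff.2 hw, smul_q_sub_one_injective (H := H) (n + 1) ?_⟩
  simp only [← map_smul, ← hcomm, ← hδ, smul_smul, ← pow_succ']

end GQDP
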